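/- arXiv:2306.16573 — 2 statements merged into one kernel-verified Lean document; each statement's English description precedes it below -/
import Mathlib

section
/- Let f* be an arbitrary probability density on ℝ (symmetry not required) and let f̂_r be the kernel density estimate of f_r from N i.i.d. samples Y_1, …, Y_N ∼ f*. For any fixed x ∈ ℝ, if N ≥ 3·log(2/δ)/(f_r(x)·r), then with probability at least 1 − δ over the samples, |f̂_r(x) − f_r(x)| ≤ √(3·f_r(x)·log(2/δ)/(N·r)). -/
open MeasureTheory Real Filter

/-- Density of the Gaussian `N(0, r²)`. -/
noncomputable def gaussDensity (r x : ℝ) : ℝ :=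
  (Real.sqrt (2 * Real.pi * r ^ 2))⁻¹ * Real.exp (-x ^ 2 / (2 * r ^ 2))

/-- The `r`-smoothed density `f_r(x) = ∫ f(y) w_r(x − y) dy`. -/
noncomputable def smoothed (f : ℝ → ℝ) (r x : ℝ) : ℝ :=
  ∫ y, f y * gaussDensity r (x - y)

/-- The score function `s_r(x) = f_r'(x) / f_r(x)` of the smoothed density. -/
noncomputable def score (f : ℝ → ℝ) (r x : ℝ) : ℝ :=
  deriv (smoothed f r) x / smoothed f r x

/-- The `r`-smoothed Fisher information `I_r = E_{x∼f_r}[s_r(x)²]`. -/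
noncomputable def fisherInfo (f : ℝ → ℝ) (r : ℝ) : ℝ :=
  ∫ x, smoothed f r x * score f r x ^ 2

/-- The measure on ℝ with density `f` with respect to Lebesgue measure. -/
noncomputable def densMeasure (f : ℝ → ℝ) : Measure ℝ :=
  MeasureTheory.volume.withDensity fun x => ENNReal.ofReal (f x)

/-- `f` is a probability density on ℝ. -/
def IsDensity (f : ℝ → ℝ) : Prop :=
  (∀ x, 0 ≤ f x) ∧ MeasureTheory.Integrable f ∧ (∫ x, f x) = 1

/-- The density `f` has mean `μ`. -/
def HasMean (f : ℝ → ℝ) (μ : ℝ) : Prop :=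
  MeasureTheory.Integrable (fun x => x * f x) ∧ (∫ x, x * f x) = μ

/-- The density `f` (with mean `μ`) has variance `σ2`. -/
def HasVar (f : ℝ → ℝ) (μ σ2 : ℝ) : Prop :=
  MeasureTheory.Integrable (fun x => (x - μ) ^ 2 * f x) ∧ (∫ x, (x - μ) ^ 2 * f x) = σ2

/-- Kernel density estimate from `N` samples `Y`. -/
noncomputable def kde (r : ℝ) (N : ℕ) (Y : Fin N → ℝ) (x : ℝ) : ℝ :=
  (N : ℝ)⁻¹ * ∑ i, gaussDensity r (x - Y i)

/-- Score of the kernel density estimate. -/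
noncomputable def kdeScore (r : ℝ) (N : ℕ) (Y : Fin N → ℝ) (x : ℝ) : ℝ :=
  deriv (kde r N Y) x / kde r N Y x

/-- The clipping threshold `(2/r)·√(log(N / log(1/δ)))`. -/
noncomputable def clipThreshold (r : ℝ) (N : ℕ) (δ : ℝ) : ℝ :=
  (2 / r) * Real.sqrt (Real.log ((N : ℝ) / Real.log (1 / δ)))

/-- The clipped KDE score. -/
noncomputable def clippedScore (r : ℝ) (N : ℕ) (δ : ℝ) (Y : Fin N → ℝ) (x : ℝ) : ℝ :=
  Real.sign (kdeScore r N Y x) * min |kdeScore r N Y x| (clipThreshold r N δ)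

/-- The clipped KDE score symmetrized around the point `c`. -/
noncomputable def symScore (r : ℝ) (N : ℕ) (δ : ℝ) (Y : Fin N → ℝ) (c x : ℝ) : ℝ :=
  if c ≤ x then clippedScore r N δ Y x else - clippedScore r N δ Y (2 * c - x)

open ProbabilityTheory InformationTheory Set

/-!
Write `f̂_r(x) = N⁻¹ ∑ w(Y_i)` with `w y = w_r(x - y)`, so that `0 ≤ w ≤ 1/(2r)` and
`E w(Y_i) = f_r(x)`. By convexity of `exp`, a variable with values in `[0, b]` and mean `m` has
moment generating function at most `exp (m (e^{tb} - 1) / b)`; the Chernoff bound at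
`t = log x / b` then bounds both tails `∑ w(Y_i) ≷ N m x` by `exp (-(N m / b) klFun x)`, where
`klFun x = x log x + 1 - x ≥ (x - 1)² / 4` on `[0, 2]`. For the deviation `ε = u m` of the
theorem, the hypothesis on `N` gives `u ≤ 1`, and the exponent is `(3/2) log (2/δ)`.
-/

theorem sq_sub_one_div_four_le_klFun {x : ℝ} (hx0 : 0 ≤ x) (hx2 : x ≤ 2) :
    (x - 1) ^ 2 / 4 ≤ klFun x := by
  set g : ℝ → ℝ := fun x => klFun x - (x - 1) ^ 2 / 4 with hg_def
  have hg : ∀ y ∈ Ioo 0 2, HasDerivAt g (log y - (y - 1) / 2) y := fun y hy => by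
    refine ((hasDerivAt_klFun hy.1.ne').sub
      ((((hasDerivAt_id y).sub_const 1).pow 2).div_const 4)).congr_deriv ?_
    simp only [id_eq]; ring
  have hgc : Continuous g := by fun_prop
  have hg1 : g 1 = 0 := by simp [hg_def, klFun_one]
  suffices 0 ≤ g x by simpa [hg_def, sub_nonneg] using this
  rcases le_total x 1 with hx1 | hx1
  · have hanti : AntitoneOn g (Icc 0 1) := by
      refine antitoneOn_of_hasDerivWithinAt_nonpos (f' := fun y => log y - (y - 1) / 2)
        (convex_Icc 0 1) hgc.continuousOn (fun y hy => ?_) (fun y hy => ?_)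
      · rw [interior_Icc] at hy
        exact (hg y ⟨hy.1, by linarith [hy.2]⟩).hasDerivWithinAt
      · rw [interior_Icc] at hy
        linarith [log_le_sub_one_of_pos hy.1, hy.2]
    exact hg1 ▸ hanti ⟨hx0, hx1⟩ ⟨zero_le_one, le_rfl⟩ hx1
  · have hmono : MonotoneOn g (Icc 1 2) := by
      refine monotoneOn_of_hasDerivWithinAt_nonneg (f' := fun y => log y - (y - 1) / 2)
        (convex_Icc 1 2) hgc.continuousOn (fun y hy => ?_) (fun y hy => ?_)
      · rw [interior_Icc] at hy
        exact (hg y ⟨by linarith [hy.1], hy.2⟩).hasDerivWithinAt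
      · rw [interior_Icc] at hy
        have hy0 : 0 < y := by linarith [hy.1]
        have : (y - 1) / 2 ≤ 1 - y⁻¹ := by
          rw [← sub_nonneg]; field_simp; nlinarith [hy.1, hy.2]
        linarith [one_sub_inv_le_log_of_pos hy0]
    exact hg1 ▸ hmono ⟨le_rfl, by norm_num⟩ ⟨hx1, hx2⟩ hx1

theorem exp_mul_le_one_add_div_mul_exp_sub_one {t b w : ℝ} (hb : 0 < b) (hw : w ∈ Icc 0 b) :
    exp (t * w) ≤ 1 + w / b * (exp (t * b) - 1) := by
  have hconv := convexOn_exp.2 (mem_univ 0) (mem_univ (t * b))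
    (sub_nonneg.2 ((div_le_one hb).2 hw.2)) (div_nonneg hw.1 hb.le) (sub_add_cancel 1 (w / b))
  simp only [smul_eq_mul, mul_zero, zero_add, exp_zero, mul_one] at hconv
  calc exp (t * w) = exp (w / b * (t * b)) := by field_simp
    _ ≤ 1 - w / b + w / b * exp (t * b) := hconv
    _ = 1 + w / b * (exp (t * b) - 1) := by ring

section BoundedSum

variable {α ι : Type*} [MeasurableSpace α] [Fintype ι] {ν : Measure α} {w : α → ℝ}

theorem mgf_sum_pi [SigmaFinite ν] (t : ℝ) :
    mgf (fun Y : ι → α => ∑ i, w (Y i)) (Measure.pi fun _ => ν) t =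
      mgf w ν t ^ Fintype.card ι := by
  simp only [mgf, Finset.mul_sum, exp_sum]
  exact integral_fintype_prod_eq_pow (μ := ν) fun y => exp (t * w y)

variable [IsProbabilityMeasure ν] {b m : ℝ}

theorem mgf_le_exp_of_mem_Icc (hw : Measurable w) (hb : 0 < b) (hwb : ∀ y, w y ∈ Icc 0 b)
    (hm : ∫ y, w y ∂ν = m) (t : ℝ) :
    mgf w ν t ≤ exp (m / b * (exp (t * b) - 1)) := by
  have hwi : Integrable w ν := .of_mem_Icc 0 b hw.aemeasurable (ae_of_all _ hwb)
  calc mgf w ν t ≤ ∫ y, 1 + w y / b * (exp (t * b) - 1) ∂ν :=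
        integral_mono_of_nonneg (ae_of_all _ fun _ => (exp_pos _).le)
          ((integrable_const 1).add ((hwi.div_const b).mul_const _))
          (ae_of_all _ fun y => exp_mul_le_one_add_div_mul_exp_sub_one hb (hwb y))
    _ = 1 + m / b * (exp (t * b) - 1) := by
        rw [integral_add (integrable_const 1) ((hwi.div_const b).mul_const _), integral_mul_const,
          integral_div, hm]
        simp
    _ ≤ exp (m / b * (exp (t * b) - 1)) := by
        linarith [add_one_le_exp (m / b * (exp (t * b) - 1))]

theorem integrable_exp_mul_sum_pi (hw : Measurable w) (hwb : ∀ y, w y ∈ Icc 0 b) (t : ℝ) :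
    Integrable (fun Y : ι → α => exp (t * ∑ i, w (Y i))) (Measure.pi fun _ => ν) := by
  simp only [Finset.mul_sum, exp_sum]
  exact Integrable.fintype_prod fun _ =>
    integrable_exp_mul_of_mem_Icc hw.aemeasurable (ae_of_all _ hwb)

theorem exp_mul_mgf_sum_pi_le_exp_klFun (hw : Measurable w) (hb : 0 < b)
    (hwb : ∀ y, w y ∈ Icc 0 b) (hm : ∫ y, w y ∂ν = m) {x : ℝ} (hx : 0 < x) :
    exp (-(log x / b) * (Fintype.card ι * m * x)) *
        mgf (fun Y : ι → α => ∑ i, w (Y i)) (Measure.pi fun _ => ν) (log x / b) ≤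
      exp (-(Fintype.card ι * m / b * klFun x)) := by
  rw [mgf_sum_pi]
  calc _ ≤ exp (-(log x / b) * (Fintype.card ι * m * x)) *
        exp (m / b * (exp (log x / b * b) - 1)) ^ Fintype.card ι := by
        gcongr
        · exact mgf_nonneg
        · exact mgf_le_exp_of_mem_Icc hw hb hwb hm _
    _ = exp (-(Fintype.card ι * m / b * klFun x)) := by
        rw [div_mul_cancel₀ _ hb.ne', exp_log hx, ← exp_nat_mul, ← exp_add, klFun]
        ring_nf

theorem measureReal_pi_sum_ge_le_exp_klFun (hw : Measurable w) (hb : 0 < b)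
    (hwb : ∀ y, w y ∈ Icc 0 b) (hm : ∫ y, w y ∂ν = m) {x : ℝ} (hx : 1 ≤ x) :
    (Measure.pi fun _ : ι => ν).real {Y | Fintype.card ι * m * x ≤ ∑ i, w (Y i)} ≤
      exp (-(Fintype.card ι * m / b * klFun x)) :=
  (measure_ge_le_exp_mul_mgf _ (div_nonneg (log_nonneg hx) hb.le)
    (integrable_exp_mul_sum_pi hw hwb _)).trans
    (exp_mul_mgf_sum_pi_le_exp_klFun hw hb hwb hm (by linarith))

theorem measureReal_pi_sum_lt_le_exp_klFun (hw : Measurable w) (hb : 0 < b)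
    (hwb : ∀ y, w y ∈ Icc 0 b) (hm : ∫ y, w y ∂ν = m) {x : ℝ} (hx0 : 0 ≤ x)
    (hx1 : x ≤ 1) :
    (Measure.pi fun _ : ι => ν).real {Y | ∑ i, w (Y i) < Fintype.card ι * m * x} ≤
      exp (-(Fintype.card ι * m / b * klFun x)) := by
  -- at `x = 0` the Chernoff parameter `log x / b` is a junk value, but the event is empty
  rcases hx0.eq_or_lt with rfl | hx0
  · have hempty : {Y : ι → α | ∑ i, w (Y i) < Fintype.card ι * m * 0} = ∅ :=
      eq_empty_of_forall_notMem fun Y hY =>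
        (Finset.sum_nonneg fun i _ => (hwb (Y i)).1).not_gt (by simpa using hY)
    rw [hempty, measureReal_empty]
    exact (exp_pos _).le
  · calc _ ≤ (Measure.pi fun _ : ι => ν).real
          {Y | ∑ i, w (Y i) ≤ Fintype.card ι * m * x} :=
          measureReal_mono (ofPred_subset_ofPred.2 fun _ => le_of_lt)
      _ ≤ _ := (measure_le_le_exp_mul_mgf _
          (div_nonpos_of_nonpos_of_nonneg (log_nonpos hx0.le hx1) hb.le)
          (integrable_exp_mul_sum_pi hw hwb _)).trans
          (exp_mul_mgf_sum_pi_le_exp_klFun hw hb hwb hm hx0)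

theorem ofReal_one_sub_le_of_measureReal_compl_le {μ : Measure α} [IsProbabilityMeasure μ]
    {s : Set α} {ε : ℝ} (h : μ.real sᶜ ≤ ε) : ENNReal.ofReal (1 - ε) ≤ μ s := by
  rw [← ofReal_measureReal]
  refine ENNReal.ofReal_le_ofReal ?_
  have := measureReal_union_le (μ := μ) s sᶜ
  rw [union_compl_self, probReal_univ] at this
  linarith

theorem ofReal_one_sub_le_measure_pi_abs_mean_sub_le (hw : Measurable w) (hb : 0 < b)
    (hwb : ∀ y, w y ∈ Icc 0 b) (hm : ∫ y, w y ∂ν = m) (hι : 0 < Fintype.card ι) {u : ℝ}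
    (hu0 : 0 ≤ u) (hu1 : u ≤ 1) :
    ENNReal.ofReal (1 - 2 * exp (-(Fintype.card ι * m / b * (u ^ 2 / 4)))) ≤
      (Measure.pi fun _ : ι => ν)
        {Y | |(Fintype.card ι : ℝ)⁻¹ * ∑ i, w (Y i) - m| ≤ u * m} := by
  set n : ℝ := (Fintype.card ι : ℝ)
  have hn : 0 < n := Nat.cast_pos.2 hι
  have hm0 : 0 ≤ m := hm ▸ integral_nonneg fun y => (hwb y).1
  have hexp : ∀ x, |x - 1| = u →
      exp (-(n * m / b * klFun x)) ≤ exp (-(n * m / b * (u ^ 2 / 4))) := by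
    intro x hx
    obtain ⟨hx0, hx2⟩ := abs_le.1 (hx.trans_le hu1)
    have hkl := sq_sub_one_div_four_le_klFun (x := x) (by linarith) (by linarith)
    rw [← sq_abs, hx] at hkl
    gcongr
  refine ofReal_one_sub_le_of_measureReal_compl_le ?_
  calc _ ≤ (Measure.pi fun _ : ι => ν).real
        ({Y | n * m * (1 + u) ≤ ∑ i, w (Y i)} ∪ {Y | ∑ i, w (Y i) < n * m * (1 - u)}) := by
        refine measureReal_mono fun Y hY => ?_
        have hsum : ∑ i, w (Y i) = n * (n⁻¹ * ∑ i, w (Y i)) := by field_simp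
        simp only [mem_compl_iff, mem_ofPred_eq, not_le, mem_union] at hY ⊢
        rw [hsum]
        rcases lt_abs.1 hY with h | h
        · left; nlinarith
        · right; nlinarith
    _ ≤ _ := measureReal_union_le _ _
    _ ≤ exp (-(n * m / b * (u ^ 2 / 4))) + exp (-(n * m / b * (u ^ 2 / 4))) := add_le_add
        ((measureReal_pi_sum_ge_le_exp_klFun hw hb hwb hm (by linarith)).trans
          (hexp _ (by simp [abs_of_nonneg hu0])))
        ((measureReal_pi_sum_lt_le_exp_klFun hw hb hwb hm (by linarith) (by linarith)).trans
          (hexp _ (by simp [abs_of_nonneg hu0])))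
    _ = 2 * exp (-(n * m / b * (u ^ 2 / 4))) := by ring

end BoundedSum

@[fun_prop]
theorem continuous_gaussDensity (r : ℝ) : Continuous (gaussDensity r) := by
  unfold gaussDensity
  fun_prop

theorem gaussDensity_pos {r : ℝ} (hr : r ≠ 0) (z : ℝ) : 0 < gaussDensity r z := by
  unfold gaussDensity
  positivity

theorem gaussDensity_le {r : ℝ} (hr : 0 < r) (z : ℝ) : gaussDensity r z ≤ (2 * r)⁻¹ := by
  have hsqrt : 2 * r ≤ √(2 * π * r ^ 2) :=
    (le_sqrt (by positivity) (by positivity)).2 (by nlinarith [pi_gt_three, sq_nonneg r])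
  calc gaussDensity r z ≤ (√(2 * π * r ^ 2))⁻¹ * 1 := by
        unfold gaussDensity
        gcongr
        exact exp_le_one_iff.2
          (div_nonpos_of_nonpos_of_nonneg (neg_nonpos.2 (sq_nonneg z)) (by positivity))
    _ ≤ (2 * r)⁻¹ := by rw [mul_one]; gcongr

theorem integral_densMeasure {f : ℝ → ℝ} (hf0 : ∀ x, 0 ≤ f x) (hf : AEMeasurable f)
    (g : ℝ → ℝ) : ∫ y, g y ∂densMeasure f = ∫ y, f y * g y := by
  rw [densMeasure, integral_withDensity_eq_integral_toReal_smul₀ hf.ennreal_ofReal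
    (ae_of_all _ fun _ => ENNReal.ofReal_lt_top)]
  simp only [ENNReal.toReal_ofReal (hf0 _), smul_eq_mul]

theorem isProbabilityMeasure_densMeasure {f : ℝ → ℝ} (hf : IsDensity f) :
    IsProbabilityMeasure (densMeasure f) := by
  obtain ⟨hf0, hfi, hf1⟩ := hf
  constructor
  rw [densMeasure, withDensity_apply _ MeasurableSet.univ, setLIntegral_univ,
    ← ofReal_integral_eq_lintegral_ofReal hfi (ae_of_all _ hf0), hf1, ENNReal.ofReal_one]

theorem smoothed_eq_integral_densMeasure {f : ℝ → ℝ} (hf0 : ∀ x, 0 ≤ f x)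
    (hf : AEMeasurable f) (r x : ℝ) :
    smoothed f r x = ∫ y, gaussDensity r (x - y) ∂densMeasure f :=
  (integral_densMeasure hf0 hf _).symm

theorem smoothed_pos {f : ℝ → ℝ} (hf : IsDensity f) {r : ℝ} (hr : 0 < r) (x : ℝ) :
    0 < smoothed f r x := by
  have := isProbabilityMeasure_densMeasure hf
  have hpos : ∀ y, 0 < gaussDensity r (x - y) := fun y => gaussDensity_pos hr.ne' _
  rw [smoothed_eq_integral_densMeasure hf.1 hf.2.1.aemeasurable,
    integral_pos_iff_support_of_nonneg (fun y => (hpos y).le)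
      (.of_mem_Icc 0 (2 * r)⁻¹ (by fun_prop)
        (ae_of_all _ fun y => ⟨(hpos y).le, gaussDensity_le hr _⟩))]
  simp [Function.support, (hpos _).ne']

/-- Pointwise density estimate guarantee: for a fixed point `x`, if
`N ≥ 3 log(2/δ)/(f_r(x)·r)` then with probability at least `1 − δ` over the `N` samples,
`|f̂_r(x) − f_r(x)| ≤ √(3 f_r(x) log(2/δ)/(N r))`. -/
theorem pointwise_density_estimate
    (fStar : ℝ → ℝ) (r : ℝ) (hr : 0 < r) (hf : IsDensity fStar)
    (N : ℕ) (δ : ℝ) (hδ : 0 < δ) (hδ1 : δ < 1) (x : ℝ)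
    (hN : 3 * Real.log (2 / δ) / (smoothed fStar r x * r) ≤ (N : ℝ)) :
    (Measure.pi fun _ : Fin N => densMeasure fStar)
      {Y | |kde r N Y x - smoothed fStar r x| ≤
            Real.sqrt (3 * smoothed fStar r x * Real.log (2 / δ) / (N * r))}
      ≥ ENNReal.ofReal (1 - δ) := by
  have := isProbabilityMeasure_densMeasure hf
  have hmean : ∫ y, gaussDensity r (x - y) ∂densMeasure fStar = smoothed fStar r x :=
    (smoothed_eq_integral_densMeasure hf.1 hf.2.1.aemeasurable r x).symm
  set m := smoothed fStar r x
  set L := log (2 / δ)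
  have hm : 0 < m := smoothed_pos hf hr x
  have hL : 0 < L := log_pos (by rw [lt_div_iff₀ hδ]; linarith)
  have hN0 : 0 < (N : ℝ) := (by positivity : 0 < 3 * L / (m * r)).trans_le hN
  set t := √(3 * m * L / (N * r))
  have ht2 : t ^ 2 = 3 * m * L / (N * r) := sq_sqrt (by positivity)
  have htm : t ≤ m := by
    refine (sqrt_le_left hm.le).2 ((div_le_iff₀ (by positivity)).2 ?_)
    nlinarith [(div_le_iff₀ (by positivity)).1 hN]
  have hgood := ofReal_one_sub_le_measure_pi_abs_mean_sub_le (ι := Fin N) (by fun_prop)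
    (inv_pos.2 (by positivity : 0 < 2 * r))
    (fun y => ⟨(gaussDensity_pos hr.ne' _).le, gaussDensity_le hr (x - y)⟩) hmean
    (by simpa using hN0) (div_nonneg (sqrt_nonneg _) hm.le) ((div_le_one hm).2 htm)
  rw [Fintype.card_fin, div_mul_cancel₀ _ hm.ne'] at hgood
  refine le_trans (ENNReal.ofReal_le_ofReal ?_) hgood
  have hexponent : N * m / (2 * r)⁻¹ * ((t / m) ^ 2 / 4) = 3 / 2 * L := by
    rw [div_pow, ht2]; field_simp; ring
  have hδL : exp (-L) = δ / 2 := by rw [exp_neg, exp_log (by positivity), inv_div]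
  rw [hexponent]
  linarith [exp_le_exp.2 (by linarith : -(3 / 2 * L) ≤ -L)]
end

section
/- Let f* be an arbitrary probability density on ℝ (symmetry not required), and let f_r be its r-smoothing with score function s_r. For every x ∈ ℝ with f_r(x) > 0, |s_r(x)| ≤ (1/r)·√(2·log(1/(√(2π)·r·f_r(x)))). -/
open MeasureTheory Real Filter

/-! The function `x ↦ log f_r(x) + x² / (2r²)` is the logarithm of a Laplace transform, hence
convex, so it lies above its tangent lines: `f_r(x + h) ≥ f_r(x) · exp (h s_r(x) − h² / (2r²))`.
Concretely, shifting the Gaussian kernel by `h` multiplies it by an exponential tilt, and `eᵘ ≥ 1 + u`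
under the integral gives the inequality. Taking `h = r² s_r(x)` and `f_r ≤ 1 / (√(2π) r)` yields
`f_r(x) · exp (r² s_r(x)² / 2) ≤ 1 / (√(2π) r)`, which is the bound. -/

namespace gaussDensity

variable {r : ℝ}

theorem pos (hr : 0 < r) (t : ℝ) : 0 < gaussDensity r t := by
  unfold gaussDensity
  have : 0 < Real.sqrt (2 * Real.pi * r ^ 2) := by positivity
  positivity

theorem le_inv_sqrt_two_pi_mul (hr : 0 < r) (t : ℝ) :
    gaussDensity r t ≤ (Real.sqrt (2 * Real.pi) * r)⁻¹ := by
  unfold gaussDensity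
  rw [Real.sqrt_mul (by positivity), Real.sqrt_sq hr.le]
  refine mul_le_of_le_one_right (by positivity) (Real.exp_le_one_iff.mpr ?_)
  rw [neg_div]
  exact neg_nonpos.mpr (by positivity)

@[fun_prop]
theorem continuous (r : ℝ) : Continuous (gaussDensity r) := by
  unfold gaussDensity
  fun_prop

theorem add_eq_mul_exp (r t h : ℝ) :
    gaussDensity r (t + h) = gaussDensity r t * Real.exp (-(t * h) / r ^ 2 - h ^ 2 / (2 * r ^ 2)) := by
  unfold gaussDensity
  rw [mul_assoc _ (Real.exp _), ← Real.exp_add]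
  congr 2
  ring

theorem hasDerivAt_sub (r y x : ℝ) :
    HasDerivAt (fun x => gaussDensity r (x - y)) ((y - x) / r ^ 2 * gaussDensity r (x - y)) x := by
  unfold gaussDensity
  have hsq : HasDerivAt (fun x : ℝ => -(x - y) ^ 2 / (2 * r ^ 2)) ((y - x) / r ^ 2) x := by
    refine ((((hasDerivAt_id x).sub_const y).pow 2).neg.div_const (2 * r ^ 2)).congr_deriv ?_
    simp only [id, Nat.cast_ofNat, mul_one]
    ring
  refine (hsq.exp.const_mul (Real.sqrt (2 * Real.pi * r ^ 2))⁻¹).congr_deriv ?_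
  ring

theorem abs_mul_exp_le (hr : 0 < r) (t : ℝ) : |t| * Real.exp (-t ^ 2 / (2 * r ^ 2)) ≤ r := by
  have hAMGM : |t| ≤ r * (t ^ 2 / (2 * r ^ 2) + 1) := by
    have : r * (t ^ 2 / (2 * r ^ 2) + 1) - |t| = (|t| - r) ^ 2 / (2 * r) + r / 2 := by
      field_simp
      rw [sub_sq, sq_abs]
      ring
    nlinarith [div_nonneg (sq_nonneg (|t| - r)) (by positivity : (0 : ℝ) ≤ 2 * r)]
  have hexp := Real.add_one_le_exp (t ^ 2 / (2 * r ^ 2))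
  rw [neg_div, Real.exp_neg, ← div_eq_mul_inv, div_le_iff₀ (Real.exp_pos _)]
  exact hAMGM.trans (mul_le_mul_of_nonneg_left hexp hr.le)

theorem abs_div_sq_mul_le (hr : 0 < r) (t : ℝ) :
    |t / r ^ 2 * gaussDensity r t| ≤ (Real.sqrt (2 * Real.pi) * r ^ 2)⁻¹ := by
  unfold gaussDensity
  rw [Real.sqrt_mul (by positivity), Real.sqrt_sq hr.le, abs_mul, abs_mul, abs_div,
    abs_of_pos (by positivity : (0 : ℝ) < r ^ 2),
    abs_of_pos (by positivity : (0 : ℝ) < (Real.sqrt (2 * Real.pi) * r)⁻¹),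
    abs_of_pos (Real.exp_pos _)]
  calc |t| / r ^ 2 * ((Real.sqrt (2 * Real.pi) * r)⁻¹ * Real.exp (-t ^ 2 / (2 * r ^ 2)))
      = |t| * Real.exp (-t ^ 2 / (2 * r ^ 2)) * (Real.sqrt (2 * Real.pi) * r ^ 3)⁻¹ := by
        field_simp
    _ ≤ r * (Real.sqrt (2 * Real.pi) * r ^ 3)⁻¹ := by gcongr; exact abs_mul_exp_le hr t
    _ = (Real.sqrt (2 * Real.pi) * r ^ 2)⁻¹ := by field_simp

end gaussDensity

section smoothed

variable {f : ℝ → ℝ} {r : ℝ}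

theorem integrable_mul_gaussDensity_sub (hf : Integrable f) (hr : 0 < r) (x : ℝ) :
    Integrable fun y => f y * gaussDensity r (x - y) :=
  hf.mul_bdd (by fun_prop : Continuous fun y => gaussDensity r (x - y)).aestronglyMeasurable
    (Eventually.of_forall fun y => by
      rw [Real.norm_eq_abs, abs_of_pos (gaussDensity.pos hr _)]
      exact gaussDensity.le_inv_sqrt_two_pi_mul hr _)

theorem smoothed_nonneg (hf0 : ∀ y, 0 ≤ f y) (hr : 0 < r) (x : ℝ) : 0 ≤ smoothed f r x :=
  integral_nonneg fun y => mul_nonneg (hf0 y) (gaussDensity.pos hr _).le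

theorem smoothed_le (hf : IsDensity f) (hr : 0 < r) (x : ℝ) :
    smoothed f r x ≤ (Real.sqrt (2 * Real.pi) * r)⁻¹ := by
  obtain ⟨hf0, hfint, hf1⟩ := hf
  calc smoothed f r x ≤ ∫ y, f y * (Real.sqrt (2 * Real.pi) * r)⁻¹ :=
        integral_mono (integrable_mul_gaussDensity_sub hfint hr x) (hfint.mul_const _) fun y =>
          mul_le_mul_of_nonneg_left (gaussDensity.le_inv_sqrt_two_pi_mul hr _) (hf0 y)
    _ = (Real.sqrt (2 * Real.pi) * r)⁻¹ := by rw [integral_mul_const, hf1, one_mul]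

theorem hasDerivAt_smoothed (hf : Integrable f) (hr : 0 < r) (x : ℝ) :
    Integrable (fun y => f y * ((y - x) / r ^ 2 * gaussDensity r (x - y))) ∧
      HasDerivAt (smoothed f r) (∫ y, f y * ((y - x) / r ^ 2 * gaussDensity r (x - y))) x := by
  refine hasDerivAt_integral_of_dominated_loc_of_deriv_le
    (bound := fun y => |f y| * (Real.sqrt (2 * Real.pi) * r ^ 2)⁻¹) (Metric.ball_mem_nhds x one_pos)
    (Eventually.of_forall fun x' => hf.aestronglyMeasurable.mul
      (by fun_prop : Continuous fun y => gaussDensity r (x' - y)).aestronglyMeasurable)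
    (integrable_mul_gaussDensity_sub hf hr x)
    (hf.aestronglyMeasurable.mul (by fun_prop : Continuous fun y =>
      (y - x) / r ^ 2 * gaussDensity r (x - y)).aestronglyMeasurable)
    (Eventually.of_forall fun y x' _ => ?_) (hf.abs.mul_const _)
    (Eventually.of_forall fun y x' _ => (gaussDensity.hasDerivAt_sub r y x').const_mul (f y))
  rw [Real.norm_eq_abs, abs_mul, ← abs_neg ((y - x') / r ^ 2 * _), ← neg_mul, ← neg_div, neg_sub]
  exact mul_le_mul_of_nonneg_left (gaussDensity.abs_div_sq_mul_le hr _) (abs_nonneg _)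

theorem smoothed_mul_exp_le_smoothed_add (hf0 : ∀ y, 0 ≤ f y) (hf : Integrable f) (hr : 0 < r)
    (x h : ℝ) :
    smoothed f r x * Real.exp (h * score f r x - h ^ 2 / (2 * r ^ 2)) ≤ smoothed f r (x + h) := by
  obtain ⟨hint', hderiv⟩ := hasDerivAt_smoothed hf hr x
  set D := ∫ y, f y * ((y - x) / r ^ 2 * gaussDensity r (x - y))
  set s := score f r x with hs
  set a := h * s - h ^ 2 / (2 * r ^ 2) with ha
  rcases (smoothed_nonneg hf0 hr x).eq_or_lt with hzero | hpos
  · rw [← hzero, zero_mul]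
    exact smoothed_nonneg hf0 hr _
  have hsD : s * smoothed f r x = D := by
    rw [hs, score, hderiv.deriv, div_mul_cancel₀ _ hpos.ne']
  have hint := integrable_mul_gaussDensity_sub hf hr x
  have hpointwise : ∀ y, Real.exp a * ((1 - h * s) * (f y * gaussDensity r (x - y)) +
      h * (f y * ((y - x) / r ^ 2 * gaussDensity r (x - y)))) ≤ f y * gaussDensity r (x + h - y) := by
    intro y
    have htilt := Real.add_one_le_exp ((y - x) * h / r ^ 2 - h * s)
    rw [show x + h - y = (x - y) + h by ring, gaussDensity.add_eq_mul_exp]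
    calc _ = f y * gaussDensity r (x - y) * (Real.exp a * ((y - x) * h / r ^ 2 - h * s + 1)) := by
          ring
      _ ≤ f y * gaussDensity r (x - y) * (Real.exp a * Real.exp ((y - x) * h / r ^ 2 - h * s)) := by
          gcongr
          exact mul_nonneg (hf0 y) (gaussDensity.pos hr _).le
      _ = _ := by
          rw [← Real.exp_add, ha]
          ring_nf
  calc smoothed f r x * Real.exp a
      = ∫ y, Real.exp a * ((1 - h * s) * (f y * gaussDensity r (x - y)) +
          h * (f y * ((y - x) / r ^ 2 * gaussDensity r (x - y)))) := by
        rw [integral_const_mul, integral_add (hint.const_mul _) (hint'.const_mul _),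
          integral_const_mul, integral_const_mul, ← smoothed]
        change _ = Real.exp a * ((1 - h * s) * smoothed f r x + h * D)
        rw [← hsD]
        ring
    _ ≤ smoothed f r (x + h) :=
        integral_mono (((hint.const_mul _).add (hint'.const_mul _)).const_mul _)
          (integrable_mul_gaussDensity_sub hf hr _) hpointwise

end smoothed

theorem abs_le_of_mul_exp_sq_le {q r s : ℝ} (hq : 0 < q) (hr : 0 < r)
    (h : q * Real.exp (r ^ 2 * s ^ 2 / 2) ≤ 1) :
    |s| ≤ 1 / r * Real.sqrt (2 * Real.log (1 / q)) := by
  have hlog : r ^ 2 * s ^ 2 / 2 ≤ Real.log (1 / q) := by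
    rw [Real.le_log_iff_exp_le (by positivity), le_div_iff₀ hq, mul_comm]
    exact h
  have hrs : |r * s| ≤ Real.sqrt (2 * Real.log (1 / q)) := Real.abs_le_sqrt (by linarith [mul_pow r s 2])
  rw [abs_mul, abs_of_pos hr] at hrs
  rw [one_div, inv_mul_eq_div, le_div_iff₀ hr, mul_comm]
  exact hrs

/-- Score bound in terms of density: for every `x` with `f_r(x) > 0`,
`|s_r(x)| ≤ (1/r)·√(2·log(1/(√(2π)·r·f_r(x))))`. -/
theorem score_bound_from_density
    (fStar : ℝ → ℝ) (r : ℝ) (hr : 0 < r) (hf : IsDensity fStar)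
    (x : ℝ) (hx : 0 < smoothed fStar r x) :
    |score fStar r x| ≤
      (1 / r) * Real.sqrt (2 * Real.log (1 / (Real.sqrt (2 * Real.pi) * r * smoothed fStar r x))) := by
  set s := score fStar r x
  have htilt := smoothed_mul_exp_le_smoothed_add hf.1 hf.2.1 hr x (r ^ 2 * s)
  have hexponent : r ^ 2 * s * s - (r ^ 2 * s) ^ 2 / (2 * r ^ 2) = r ^ 2 * s ^ 2 / 2 := by
    field_simp
    ring
  rw [hexponent] at htilt
  have hbound := htilt.trans (smoothed_le hf hr _)
  refine abs_le_of_mul_exp_sq_le (by positivity) hr ?_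
  calc Real.sqrt (2 * Real.pi) * r * smoothed fStar r x * Real.exp (r ^ 2 * s ^ 2 / 2)
      = Real.sqrt (2 * Real.pi) * r * (smoothed fStar r x * Real.exp (r ^ 2 * s ^ 2 / 2)) := by ring
    _ ≤ Real.sqrt (2 * Real.pi) * r * (Real.sqrt (2 * Real.pi) * r)⁻¹ := by gcongr
    _ = 1 := mul_inv_cancel₀ (by positivity)
end
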